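/- arXiv:2107.06655 — 8 statements merged into one kernel-verified Lean document; each statement's English description precedes it below -/
import Mathlib

section
/- For all natural numbers n ≥ 1, d with 0 ≤ d ≤ n, and k with 0 ≤ k ≤ d, we have ∑_{s=0}^{k} S₂(n−s, d−s)·(d−s)·S₁(d−s, k−s) = ∑_{s=0}^{k} (−1)^s · S₂(n−s, d) · S₁(d+1, k−s), where S₁(a,b) denotes the unsigned Stirling number of the first kind and S₂(a,b) the Stirling number of the second kind. -/
/-- Unsigned Stirling numbers of the first kind:
`S1 (n+1) k = n * S1 n k + S1 n (k-1)`, `S1 0 0 = 1`. -/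
def S1 : ℕ → ℕ → ℕ
  | 0, 0 => 1
  | 0, _ + 1 => 0
  | _ + 1, 0 => 0
  | n + 1, k + 1 => n * S1 n (k + 1) + S1 n k

/-- Stirling numbers of the second kind:
`S2 (n+1) k = k * S2 n k + S2 n (k-1)`, `S2 0 0 = 1`. -/
def S2 : ℕ → ℕ → ℕ
  | 0, 0 => 1
  | 0, _ + 1 => 0
  | _ + 1, 0 => 0
  | n + 1, k + 1 => (k + 1) * S2 n (k + 1) + S2 n k

/-!
Write `F m = x (x + 1) ⋯ (x + m - 1) = ∑ₖ S₁(m, k) xᵏ`, `G n d = ∑ₛ (-1)ˢ S₂(n - s, d) xˢ`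
and `P n d = ∑ₛ S₂(n - s, d - s) (d - s) F (d - s) xˢ`, so that the two sides of the identity
are the `xᵏ`-coefficients of `P n d` and `F (d + 1) * G n d`. For `d ≤ n` these polynomials
differ only in degree `n + 1`: `F (d + 1) * G n d = P n d + (-1)ⁿ⁻ᵈ xⁿ⁺¹`.
This follows by induction on `n` from `G (n + 1) d = S₂(n + 1, d) - x G n d` and
`P n d + P n (d + 1) = S₂(n + 1, d + 1) F (d + 1)` for `d < n`; the latter is the recurrence
of `S₂` combined with `F (d + 2) = (x + d + 1) F (d + 1)`.
-/

open Polynomial Finset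

theorem S1_eq_stirlingFirst : S1 = Nat.stirlingFirst := by
  funext n k
  induction n generalizing k with
  | zero => cases k <;> rfl
  | succ n ih =>
    cases k with
    | zero => rfl
    | succ k => rw [S1, ih, ih, Nat.stirlingFirst_succ_succ]

theorem S2_eq_stirlingSecond : S2 = Nat.stirlingSecond := by
  funext n k
  induction n generalizing k with
  | zero => cases k <;> rfl
  | succ n ih =>
    cases k with
    | zero => rfl
    | succ k => rw [S2, ih, ih, Nat.stirlingSecond_succ_succ]

theorem Polynomial.coeff_ascPochhammer (R : Type*) [Semiring R] (m k : ℕ) :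
    (ascPochhammer R m).coeff k = Nat.stirlingFirst m k := by
  induction m generalizing k with
  | zero => cases k <;> simp [coeff_one]
  | succ m ih =>
    rw [ascPochhammer_succ_right, mul_add, coeff_add, coeff_mul_natCast, ih]
    cases k with
    | zero => rcases m with _ | m <;> simp
    | succ k =>
      rw [coeff_mul_X, ih, Nat.stirlingFirst_succ_succ]
      push_cast
      rw [add_comm, Nat.cast_comm]

theorem Polynomial.coeff_sum_C_mul_mul_X_pow {R : Type*} [Semiring R] (a : ℕ → R)
    (p : ℕ → R[X]) {N k : ℕ} (hk : k < N) :
    (∑ s ∈ range N, C (a s) * p s * X ^ s).coeff k =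
      ∑ s ∈ range (k + 1), a s * (p s).coeff (k - s) := by
  simp only [finsetSum_coeff, mul_assoc, coeff_C_mul, coeff_mul_X_pow']
  rw [← sum_subset (range_subset_range.2 hk)]
  · exact sum_congr rfl fun s hs => by rw [if_pos (Nat.lt_succ_iff.1 (mem_range.1 hs))]
  · intro s _ hs
    rw [if_neg (by simpa [Nat.lt_succ_iff] using hs), mul_zero]

noncomputable def altStirlingSecondPoly (n d : ℕ) : ℤ[X] :=
  ∑ s ∈ range (n + 1), C ((-1) ^ s * (Nat.stirlingSecond (n - s) d : ℤ)) * X ^ s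

noncomputable def pochhammerStirlingSum (n d : ℕ) : ℤ[X] :=
  ∑ s ∈ range (d + 1),
    C ((Nat.stirlingSecond (n - s) (d - s) * (d - s) : ℕ) : ℤ) * ascPochhammer ℤ (d - s) *
      X ^ s

theorem altStirlingSecondPoly_self (d : ℕ) : altStirlingSecondPoly d d = 1 := by
  rw [altStirlingSecondPoly, sum_range_succ', sum_eq_zero fun s hs => ?_]
  · simp [Nat.stirlingSecond_self]
  · rw [Nat.stirlingSecond_eq_zero_of_lt (by have := mem_range.1 hs; omega)]
    simp

theorem altStirlingSecondPoly_succ (n d : ℕ) :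
    altStirlingSecondPoly (n + 1) d =
      C (Nat.stirlingSecond (n + 1) d : ℤ) - X * altStirlingSecondPoly n d := by
  rw [altStirlingSecondPoly, altStirlingSecondPoly, sum_range_succ', mul_sum, sub_eq_neg_add,
    ← sum_neg_distrib]
  simp only [Nat.add_sub_add_right, Nat.sub_zero, pow_zero, one_mul, mul_one]
  congr 1
  exact sum_congr rfl fun s _ => by simp only [pow_succ, map_mul, map_neg, map_one]; ring

theorem pochhammerStirlingSum_zero_right (n : ℕ) : pochhammerStirlingSum n 0 = 0 := by
  simp [pochhammerStirlingSum]

theorem pochhammerStirlingSum_succ_succ (n d : ℕ) :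
    pochhammerStirlingSum (n + 1) (d + 1) =
      C ((Nat.stirlingSecond (n + 1) (d + 1) * (d + 1) : ℕ) : ℤ) * ascPochhammer ℤ (d + 1) +
        X * pochhammerStirlingSum n d := by
  rw [pochhammerStirlingSum, pochhammerStirlingSum, sum_range_succ', mul_sum, add_comm]
  simp only [Nat.add_sub_add_right, Nat.sub_zero, pow_zero, mul_one, pow_succ]
  congr 1
  exact sum_congr rfl fun s _ => by ring

theorem pochhammerStirlingSum_self (m : ℕ) :
    pochhammerStirlingSum m m = ascPochhammer ℤ (m + 1) - X ^ (m + 1) := by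
  induction m with
  | zero => simp [pochhammerStirlingSum]
  | succ m ih =>
    rw [pochhammerStirlingSum_succ_succ, ih, Nat.stirlingSecond_self,
      ascPochhammer_succ_right ℤ (m + 1)]
    simp only [map_natCast, one_mul]
    push_cast
    ring

theorem pochhammerStirlingSum_add_succ {m d : ℕ} (h : d < m) :
    pochhammerStirlingSum m d + pochhammerStirlingSum m (d + 1) =
      C (Nat.stirlingSecond (m + 1) (d + 1) : ℤ) * ascPochhammer ℤ (d + 1) := by
  induction m generalizing d with
  | zero => omega
  | succ m ih =>
    cases d with
    | zero =>
      rw [pochhammerStirlingSum_zero_right, pochhammerStirlingSum_succ_succ,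
        pochhammerStirlingSum_zero_right, Nat.stirlingSecond_one_right,
        Nat.stirlingSecond_one_right]
      simp
    | succ e =>
      rw [pochhammerStirlingSum_succ_succ, pochhammerStirlingSum_succ_succ,
        ascPochhammer_succ_right ℤ (e + 1), Nat.stirlingSecond_succ_succ (m + 1) (e + 1)]
      simp only [map_natCast] at ih ⊢
      push_cast at ih ⊢
      linear_combination (X : ℤ[X]) * ih (d := e) (by omega)

theorem pochhammerStirlingSum_succ_add_X_mul {n d : ℕ} (h : d ≤ n) :
    pochhammerStirlingSum (n + 1) d + X * pochhammerStirlingSum n d =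
      C (Nat.stirlingSecond (n + 1) d : ℤ) * ascPochhammer ℤ (d + 1) := by
  cases d with
  | zero => simp [pochhammerStirlingSum_zero_right]
  | succ e =>
    rw [pochhammerStirlingSum_succ_succ, add_assoc, ← mul_add,
      pochhammerStirlingSum_add_succ (by omega), ascPochhammer_succ_right ℤ (e + 1)]
    simp only [map_natCast]
    push_cast
    ring

theorem ascPochhammer_mul_altStirlingSecondPoly {n d : ℕ} (h : d ≤ n) :
    ascPochhammer ℤ (d + 1) * altStirlingSecondPoly n d =
      pochhammerStirlingSum n d + C ((-1) ^ (n - d)) * X ^ (n + 1) := by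
  induction n, h using Nat.le_induction with
  | base => simp [altStirlingSecondPoly_self, pochhammerStirlingSum_self]
  | succ n hdn ih =>
    rw [altStirlingSecondPoly_succ, Nat.sub_add_comm hdn, pow_succ, map_mul, map_neg, map_one]
    linear_combination (-X : ℤ[X]) * ih - pochhammerStirlingSum_succ_add_X_mul hdn

theorem coeff_pochhammerStirlingSum {n d k : ℕ} (hk : k ≤ d) :
    (pochhammerStirlingSum n d).coeff k =
      ∑ s ∈ range (k + 1),
        ((Nat.stirlingSecond (n - s) (d - s) * (d - s) : ℕ) : ℤ) *
          Nat.stirlingFirst (d - s) (k - s) := by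
  rw [pochhammerStirlingSum, coeff_sum_C_mul_mul_X_pow _ _ (Nat.lt_succ_of_le hk)]
  simp only [coeff_ascPochhammer]

theorem coeff_ascPochhammer_mul_altStirlingSecondPoly {n d k : ℕ} (hk : k ≤ n) :
    (ascPochhammer ℤ (d + 1) * altStirlingSecondPoly n d).coeff k =
      ∑ s ∈ range (k + 1),
        (-1 : ℤ) ^ s * Nat.stirlingSecond (n - s) d * Nat.stirlingFirst (d + 1) (k - s) := by
  have expand : ascPochhammer ℤ (d + 1) * altStirlingSecondPoly n d =
      ∑ s ∈ range (n + 1),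
        C ((-1) ^ s * (Nat.stirlingSecond (n - s) d : ℤ)) * ascPochhammer ℤ (d + 1) *
          X ^ s := by
    rw [altStirlingSecondPoly, mul_sum]
    exact sum_congr rfl fun _ _ => by ring
  rw [expand, coeff_sum_C_mul_mul_X_pow _ _ (Nat.lt_succ_of_le hk)]
  simp only [coeff_ascPochhammer]

theorem stirling_identity_first_general (n d k : ℕ) (hd : d ≤ n) (hk : k ≤ d) :
    ∑ s ∈ Finset.range (k + 1),
        ((S2 (n - s) (d - s) : ℤ) * (d - s) * S1 (d - s) (k - s)) =
    ∑ s ∈ Finset.range (k + 1),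
        (-1 : ℤ) ^ s * S2 (n - s) d * S1 (d + 1) (k - s) := by
  have key := congrArg (coeff · k) (ascPochhammer_mul_altStirlingSecondPoly hd)
  simp only [coeff_add, coeff_C_mul, coeff_X_pow, if_neg (show k ≠ n + 1 by omega), mul_zero,
    add_zero, coeff_ascPochhammer_mul_altStirlingSecondPoly (hk.trans hd),
    coeff_pochhammerStirlingSum hk] at key
  rw [S1_eq_stirlingFirst, S2_eq_stirlingSecond, key]
  refine sum_congr rfl fun s hs => ?_
  rw [Nat.cast_mul, Nat.cast_sub (by have := mem_range.1 hs; omega)]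

theorem stirling_identity_first (n d k : ℕ) (hn : 1 ≤ n) (hd : d ≤ n) (hk : k ≤ d) :
    ∑ s ∈ Finset.range (k + 1),
        ((S2 (n - s) (d - s) : ℤ) * (d - s) * S1 (d - s) (k - s)) =
    ∑ s ∈ Finset.range (k + 1),
        (-1 : ℤ) ^ s * S2 (n - s) d * S1 (d + 1) (k - s) :=
  stirling_identity_first_general n d k hd hk
end

section
/- For all natural numbers n ≥ 1, d with 0 ≤ d ≤ n, and k with 0 ≤ k ≤ d, we have ∑_{s=0}^{k} (−1)^s · S₂(n−s, d) · S₁(d+1, k−s) = ∑_{s=0}^{d−k} (−1)^s · S₂(n+1, d−s) · S₁(d−s, k), where S₁ is the unsigned Stirling number of the first kind and S₂ the Stirling number of the second kind. -/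
/-!
Write `L n d k` and `R n d k` for the two sides. Peeling off the term `s = 0` shows that both
satisfy `F (n+1) d (k+1) = S2 (n+1) d * S1 (d+1) (k+1) - F n d k` and vanish at `k = 0`; for `R`
this uses the recurrences of `S1` and `S2` in an induction on `d`. So the two sides agree along
each diagonal `(n - j, k - j)`, as long as `k ≤ n` keeps the diagonal inside `ℕ × ℕ`.
-/

open Finset

lemma S1_succ_succ (n k : ℕ) : S1 (n + 1) (k + 1) = n * S1 n (k + 1) + S1 n k := rfl

lemma S2_succ_succ (n k : ℕ) : S2 (n + 1) (k + 1) = (k + 1) * S2 n (k + 1) + S2 n k := rfl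

lemma S1_eq_zero_of_lt {n k : ℕ} (h : n < k) : S1 n k = 0 := by
  induction n generalizing k with
  | zero => obtain ⟨k, rfl⟩ := Nat.exists_eq_add_one_of_ne_zero (by omega : k ≠ 0); rfl
  | succ n ih =>
    obtain ⟨k, rfl⟩ := Nat.exists_eq_add_one_of_ne_zero (by omega : k ≠ 0)
    rw [S1_succ_succ, ih (by omega), ih (by omega), mul_zero]

lemma S2_succ_mul_S1_zero (n j : ℕ) : S2 (n + 1) j * S1 j 0 = 0 := by
  cases j <;> rfl

namespace Stirling

def leftSum (n d k : ℕ) : ℤ :=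
  ∑ s ∈ range (k + 1), (-1 : ℤ) ^ s * S2 (n - s) d * S1 (d + 1) (k - s)

/-- The right-hand side of the identity, summed over all `s ≤ d`: the terms with `d - s < k`
vanish, and the full range spares the recurrence in `d` any condition on `k`. -/
def rightSum (n d k : ℕ) : ℤ :=
  ∑ s ∈ range (d + 1), (-1 : ℤ) ^ s * S2 (n + 1) (d - s) * S1 (d - s) k

lemma rightSum_eq (n d k : ℕ) :
    rightSum n d k =
      ∑ s ∈ range (d - k + 1), (-1 : ℤ) ^ s * S2 (n + 1) (d - s) * S1 (d - s) k := by
  refine (sum_subset (range_subset_range.2 (by omega)) fun s hs hs' => ?_).symm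
  rw [mem_range] at hs hs'
  rw [S1_eq_zero_of_lt (by omega), Nat.cast_zero, mul_zero]

lemma leftSum_zero (n d : ℕ) : leftSum n d 0 = 0 := by
  simp [leftSum, S1]

lemma rightSum_zero (n d : ℕ) : rightSum n d 0 = 0 := by
  refine sum_eq_zero fun s _ => ?_
  rw [mul_assoc, ← Nat.cast_mul, S2_succ_mul_S1_zero, Nat.cast_zero, mul_zero]

lemma leftSum_succ_succ (n d k : ℕ) :
    leftSum (n + 1) d (k + 1) = S2 (n + 1) d * S1 (d + 1) (k + 1) - leftSum n d k := by
  simp only [leftSum, sum_range_succ', Nat.add_sub_add_right, Nat.sub_zero, pow_succ, pow_zero,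
    mul_neg, mul_one, neg_mul, sum_neg_distrib]
  ring

lemma rightSum_succ_left (n d k : ℕ) :
    rightSum n (d + 1) k = S2 (n + 1) (d + 1) * S1 (d + 1) k - rightSum n d k := by
  simp only [rightSum, sum_range_succ', Nat.add_sub_add_right, Nat.sub_zero, pow_succ, pow_zero,
    mul_neg, mul_one, neg_mul, sum_neg_distrib]
  ring

lemma rightSum_succ_succ_add (n d k : ℕ) :
    rightSum (n + 1) d (k + 1) + rightSum n d k = S2 (n + 1) d * S1 (d + 1) (k + 1) := by
  induction d with
  | zero => simp [rightSum, S1, S2]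
  | succ d ih =>
    rw [rightSum_succ_left, rightSum_succ_left, S1_succ_succ (d + 1), S2_succ_succ (n + 1)]
    push_cast
    linear_combination -ih

lemma leftSum_eq_rightSum {n k : ℕ} (h : k ≤ n) (d : ℕ) : leftSum n d k = rightSum n d k := by
  induction k generalizing n with
  | zero => rw [leftSum_zero, rightSum_zero]
  | succ k ih =>
    obtain ⟨n, rfl⟩ := Nat.exists_eq_add_one_of_ne_zero (by omega : n ≠ 0)
    rw [leftSum_succ_succ, ih (by omega), ← rightSum_succ_succ_add, add_sub_cancel_right]

end Stirling

theorem stirling_identity_second_general (n d k : ℕ) (hd : d ≤ n) (hk : k ≤ d) :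
    ∑ s ∈ Finset.range (k + 1),
        (-1 : ℤ) ^ s * S2 (n - s) d * S1 (d + 1) (k - s) =
    ∑ s ∈ Finset.range (d - k + 1),
        (-1 : ℤ) ^ s * S2 (n + 1) (d - s) * S1 (d - s) k := by
  rw [← Stirling.rightSum_eq]
  exact Stirling.leftSum_eq_rightSum (hk.trans hd) d

theorem stirling_identity_second (n d k : ℕ) (hn : 1 ≤ n) (hd : d ≤ n) (hk : k ≤ d) :
    ∑ s ∈ Finset.range (k + 1),
        (-1 : ℤ) ^ s * S2 (n - s) d * S1 (d + 1) (k - s) =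
    ∑ s ∈ Finset.range (d - k + 1),
        (-1 : ℤ) ^ s * S2 (n + 1) (d - s) * S1 (d - s) k :=
  stirling_identity_second_general n d k hd hk
end

section
/- Let (A(n,k))_{n∈ℕ, k∈ℤ} and (B(n,k))_{n∈ℕ, k∈ℕ} be families of real numbers with A(n,k) = 0 for k > n and B(n,k) = 0 for k > n, satisfying A(n+2,k) − A(n,k) = (n+1)²·A(n,k−2) for all n ≥ 0, k ∈ ℤ, and B(n,k) − B(n,k+2) = (k+1)²·B(n+2,k+2) for all n ≥ 1, k ≥ 0. Then for all n ≥ 1, 1 ≤ d ≤ n and 3 ≤ k ≤ d+1: ∑_{s even, 0 ≤ s ≤ d−k} B(n, d−s)·(d−s−1)²·A(d−s−2, k−2) = ∑_{s even, 0 ≤ s ≤ d−k} B(n+s, d)·A(d, k+s). -/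
/-!
Both sides satisfy the same recurrence in `d` with step two: passing from `d` to `d + 2` adds
the term `B n (d + 2) * (d + 1)² * A d (k - 2)` (when `k ≤ d + 2`). On the left this is the new
`s = 0` summand. On the right, expand `A (d + 2) (k + s)` by the recurrence of `A`; the part with
`A d (k + s)` loses its summands with `k + s > d`, the part with `A d (k + s - 2)` is shifted by
two, and the two parts recombine through the recurrence of `B` into the right side at `d`.
For `d < k` both sums are empty.
-/

open Finset

def evenShifts (k d : ℕ) : Finset ℕ :=
  (range (d + 1)).filter (fun s => Even s ∧ k + s ≤ d)

lemma mem_evenShifts {k d s : ℕ} : s ∈ evenShifts k d ↔ Even s ∧ k + s ≤ d := by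
  unfold evenShifts
  simp only [mem_filter, mem_range]
  exact ⟨fun h => h.2, fun h => ⟨by omega, h⟩⟩

lemma evenShifts_eq_empty {k d : ℕ} (h : d < k) : evenShifts k d = ∅ :=
  eq_empty_of_forall_notMem fun _ hs => by have := (mem_evenShifts.1 hs).2; omega

lemma evenShifts_mono (k : ℕ) : Monotone (evenShifts k) := fun _ _ hd _ hs => by
  obtain ⟨he, hle⟩ := mem_evenShifts.1 hs
  exact mem_evenShifts.2 ⟨he, by omega⟩

lemma evenShifts_add_two {k e : ℕ} (hk : k ≤ e + 2) :
    evenShifts k (e + 2) = insert 0 ((evenShifts k e).map (addRightEmbedding 2)) := by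
  ext s
  simp only [mem_insert, mem_map, mem_evenShifts, addRightEmbedding_apply]
  constructor
  · rintro ⟨hs, hle⟩
    rcases s with _ | _ | t
    · exact .inl rfl
    · exact absurd hs Nat.not_even_one
    · exact .inr ⟨t, ⟨by simpa [Nat.even_add] using hs, by omega⟩, rfl⟩
  · rintro (rfl | ⟨t, ⟨ht, hle⟩, rfl⟩)
    · exact ⟨.zero, hk⟩
    · exact ⟨ht.add even_two, by omega⟩

lemma sum_evenShifts_add_two {M : Type*} [AddCommMonoid M] (F : ℕ → M) (k e : ℕ) :
    ∑ s ∈ evenShifts k (e + 2), F s =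
      (if k ≤ e + 2 then F 0 else 0) + ∑ s ∈ evenShifts k e, F (s + 2) := by
  split_ifs with hk
  · rw [evenShifts_add_two hk, sum_insert (by simp), sum_map]
    rfl
  · rw [evenShifts_eq_empty (by omega), evenShifts_eq_empty (by omega)]
    simp

section

variable (A : ℕ → ℤ → ℝ) (B : ℕ → ℕ → ℝ) (n k : ℕ)

def leftSum (d : ℕ) : ℝ :=
  ∑ s ∈ evenShifts k d, B n (d - s) * (((d - s : ℕ) : ℝ) - 1) ^ 2 * A (d - s - 2) ((k : ℤ) - 2)

def rightSum (d : ℕ) : ℝ :=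
  ∑ s ∈ evenShifts k d, B (n + s) d * A d ((k : ℤ) + s)

lemma leftSum_add_two (e : ℕ) :
    leftSum A B n k (e + 2) =
      (if k ≤ e + 2 then B n (e + 2) * ((e : ℝ) + 1) ^ 2 * A e ((k : ℤ) - 2) else 0) +
        leftSum A B n k e := by
  unfold leftSum
  rw [sum_evenShifts_add_two]
  congr 1
  · simp only [Nat.sub_zero, Nat.add_sub_cancel]
    push_cast
    ring_nf
  · refine sum_congr rfl fun s _ => ?_
    rw [show e + 2 - (s + 2) = e - s by omega]

lemma rightSum_add_two
    (hA0 : ∀ (n : ℕ) (k : ℤ), (n : ℤ) < k → A n k = 0)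
    (hA : ∀ (n : ℕ) (k : ℤ), A (n + 2) k - A n k = ((n : ℝ) + 1) ^ 2 * A n (k - 2))
    (hB : ∀ n k : ℕ, 1 ≤ n → B n k - B n (k + 2) = ((k : ℝ) + 1) ^ 2 * B (n + 2) (k + 2))
    (hn : 1 ≤ n) (e : ℕ) :
    rightSum A B n k (e + 2) =
      (if k ≤ e + 2 then B n (e + 2) * ((e : ℝ) + 1) ^ 2 * A e ((k : ℤ) - 2) else 0) +
        rightSum A B n k e := by
  have hdrop : ∑ s ∈ evenShifts k (e + 2), B (n + s) (e + 2) * A e ((k : ℤ) + s) =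
      ∑ s ∈ evenShifts k e, B (n + s) (e + 2) * A e ((k : ℤ) + s) := by
    refine (sum_subset (evenShifts_mono k (by omega : e ≤ e + 2)) fun s hs hs' => ?_).symm
    have : e < k + s := by
      by_contra! h
      exact hs' (mem_evenShifts.2 ⟨(mem_evenShifts.1 hs).1, h⟩)
    rw [hA0 e _ (by omega), mul_zero]
  unfold rightSum
  calc ∑ s ∈ evenShifts k (e + 2), B (n + s) (e + 2) * A (e + 2) ((k : ℤ) + s)
      = ∑ s ∈ evenShifts k (e + 2), B (n + s) (e + 2) * A e ((k : ℤ) + s) +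
          ∑ s ∈ evenShifts k (e + 2),
            B (n + s) (e + 2) * (((e : ℝ) + 1) ^ 2 * A e ((k : ℤ) + s - 2)) := by
        rw [← sum_add_distrib]
        refine sum_congr rfl fun s _ => ?_
        linear_combination B (n + s) (e + 2) * hA e ((k : ℤ) + s)
    _ = (if k ≤ e + 2 then B n (e + 2) * ((e : ℝ) + 1) ^ 2 * A e ((k : ℤ) - 2) else 0) +
          ∑ s ∈ evenShifts k e,
            (B (n + s) (e + 2) + ((e : ℝ) + 1) ^ 2 * B (n + s + 2) (e + 2)) *
              A e ((k : ℤ) + s) := by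
        rw [hdrop, sum_evenShifts_add_two, add_left_comm, ← sum_add_distrib]
        congr 1
        · simp only [add_zero, Nat.cast_zero]
          ring_nf
        · refine sum_congr rfl fun s _ => ?_
          rw [show n + (s + 2) = n + s + 2 by omega]
          push_cast
          ring_nf
    _ = _ := by
        congr 1
        refine sum_congr rfl fun s _ => ?_
        linear_combination -A e ((k : ℤ) + s) * hB (n + s) e (by omega)

theorem leftSum_eq_rightSum
    (hA0 : ∀ (n : ℕ) (k : ℤ), (n : ℤ) < k → A n k = 0)
    (hA : ∀ (n : ℕ) (k : ℤ), A (n + 2) k - A n k = ((n : ℝ) + 1) ^ 2 * A n (k - 2))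
    (hB : ∀ n k : ℕ, 1 ≤ n → B n k - B n (k + 2) = ((k : ℝ) + 1) ^ 2 * B (n + 2) (k + 2))
    (hn : 1 ≤ n) (hk : 2 ≤ k) : ∀ d, leftSum A B n k d = rightSum A B n k d
  | 0 => by simp [leftSum, rightSum, evenShifts_eq_empty (show 0 < k by omega)]
  | 1 => by simp [leftSum, rightSum, evenShifts_eq_empty (show 1 < k by omega)]
  | e + 2 => by
    rw [leftSum_add_two, rightSum_add_two A B n k hA0 hA hB hn,
      leftSum_eq_rightSum hA0 hA hB hn hk e]

end

theorem identity_A_B_first_general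
    (A : ℕ → ℤ → ℝ) (B : ℕ → ℕ → ℝ)
    (hA0 : ∀ (n : ℕ) (k : ℤ), (n : ℤ) < k → A n k = 0)
    (hA : ∀ (n : ℕ) (k : ℤ), A (n + 2) k - A n k = ((n : ℝ) + 1) ^ 2 * A n (k - 2))
    (hB : ∀ n k : ℕ, 1 ≤ n → B n k - B n (k + 2) = ((k : ℝ) + 1) ^ 2 * B (n + 2) (k + 2))
    (n d k : ℕ) (hn : 1 ≤ n) (hk3 : 3 ≤ k) :
    ∑ s ∈ (Finset.range (d + 1)).filter (fun s => Even s ∧ k + s ≤ d),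
        B n (d - s) * (((d - s : ℕ) : ℝ) - 1) ^ 2 * A (d - s - 2) ((k : ℤ) - 2) =
    ∑ s ∈ (Finset.range (d + 1)).filter (fun s => Even s ∧ k + s ≤ d),
        B (n + s) d * A d ((k : ℤ) + s) :=
  leftSum_eq_rightSum A B n k hA0 hA hB hn (by omega) d

theorem identity_A_B_first
    (A : ℕ → ℤ → ℝ) (B : ℕ → ℕ → ℝ)
    (hA0 : ∀ (n : ℕ) (k : ℤ), (n : ℤ) < k → A n k = 0)
    (hB0 : ∀ n k : ℕ, n < k → B n k = 0)
    (hA : ∀ (n : ℕ) (k : ℤ), A (n + 2) k - A n k = ((n : ℝ) + 1) ^ 2 * A n (k - 2))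
    (hB : ∀ n k : ℕ, 1 ≤ n → B n k - B n (k + 2) = ((k : ℝ) + 1) ^ 2 * B (n + 2) (k + 2))
    (n d k : ℕ) (hn : 1 ≤ n) (hd1 : 1 ≤ d) (hdn : d ≤ n) (hk3 : 3 ≤ k) (hkd : k ≤ d + 1) :
    ∑ s ∈ (Finset.range (d + 1)).filter (fun s => Even s ∧ k + s ≤ d),
        B n (d - s) * (((d - s : ℕ) : ℝ) - 1) ^ 2 * A (d - s - 2) ((k : ℤ) - 2) =
    ∑ s ∈ (Finset.range (d + 1)).filter (fun s => Even s ∧ k + s ≤ d),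
        B (n + s) d * A d ((k : ℤ) + s) :=
  identity_A_B_first_general A B hA0 hA hB n d k hn hk3
end

section
/- Let (A(n,k)) and (B(n,k)) be real arrays with A(n,k) = 0 for k > n and B(n,k) = 0 for k > n, satisfying A(n+2,k) − A(n,k) = (n+1)²·A(n,k−2) for all n ≥ 0, k ∈ ℤ, and B(n,k) − B(n,k+2) = (k+1)²·B(n+2,k+2) for all n ≥ 1, k ≥ 0. Then for all n ≥ 3, d ≥ 1 and k ≥ 1 with d ≤ n: ∑_{s even, 2 ≤ s ≤ n−d} B(n, d+s)·(d+s−1)²·A(d+s−2, k−2) = ∑_{s even, 2 ≤ s ≤ n−d} B(n−s, d)·A(d, k−s). -/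
/-!
Rewrite the left-hand side with the recurrence for `A` as
`∑ B(n, d+s) (A(d+s, k) - A(d+s-2, k))`. Going from `n` to `n + 2`, the recurrence for `B`
turns this sum into the same sum at `(n, k - 2)` plus a telescoping sum which collapses to
`B(n, d) A(d, k - 2)`; the right-hand side obeys the same recursion by peeling off its `s = 2`
term. Induction on `n` in steps of two, starting from the vanishing of both sides for `n ≤ 2`,
concludes.
-/

open Finset

theorem Finset.sum_filter_even_two_le_range {M : Type*} [AddCommMonoid M] (f : ℕ → M)
    {L N : ℕ} (hf : ∀ s, L ≤ s → f s = 0) (hL : L ≤ 2 * N + 2) :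
    ∑ s ∈ (range L).filter (fun s => Even s ∧ 2 ≤ s), f s = ∑ t ∈ range N, f (2 * t + 2) := by
  have hext : ∑ s ∈ (range L).filter (fun s => Even s ∧ 2 ≤ s), f s =
      ∑ s ∈ (range (2 * N + 2)).filter (fun s => Even s ∧ 2 ≤ s), f s := by
    refine sum_subset (filter_subset_filter _ (range_subset_range.2 hL)) fun s hs hsL => ?_
    exact hf s (not_lt.1 fun h => hsL (mem_filter.2 ⟨mem_range.2 h, (mem_filter.1 hs).2⟩))
  rw [hext]
  refine sum_nbij' (fun s => s / 2 - 1) (fun t => 2 * t + 2) ?_ ?_ ?_ ?_ ?_ <;>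
    intro a ha <;> simp only [mem_filter, mem_range, Nat.even_iff] at ha ⊢
  · omega
  · omega
  · omega
  · omega
  · congr 1
    omega

section

variable (A : ℕ → ℤ → ℝ) (B : ℕ → ℕ → ℝ)

/-- `∑_{s = 2, 4, …, 2N} B(n, d+s) (A(d+s, k) - A(d+s-2, k))`. -/
noncomputable def diffSum (d N n : ℕ) (k : ℤ) : ℝ :=
  ∑ t ∈ range N, B n (d + 2 * t + 2) * (A (d + 2 * t + 2) k - A (d + 2 * t) k)

/-- `∑_{s = 2, 4, …, 2N} B(n-s, d) A(d, k-s)`, with truncated `n - s`. -/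
noncomputable def shiftSum (d N n : ℕ) (k : ℤ) : ℝ :=
  ∑ t ∈ range N, B (n - (2 * t + 2)) d * A d (k - (2 * t + 2 : ℕ))

variable {A B}

theorem diffSum_add_two
    (hA : ∀ (n : ℕ) (k : ℤ), A (n + 2) k - A n k = ((n : ℝ) + 1) ^ 2 * A n (k - 2))
    (hB : ∀ n k : ℕ, 1 ≤ n → B n k - B n (k + 2) = ((k : ℝ) + 1) ^ 2 * B (n + 2) (k + 2))
    {n : ℕ} (hn : 1 ≤ n) (d N : ℕ) (k : ℤ) :
    diffSum A B d N (n + 2) k = diffSum A B d N n (k - 2) + B n d * A d (k - 2)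
      - B n (d + 2 * N) * A (d + 2 * N) (k - 2) := by
  set g : ℕ → ℝ := fun t => B n (d + 2 * t) * A (d + 2 * t) (k - 2)
  have hterm : ∀ t ∈ range N,
      B (n + 2) (d + 2 * t + 2) * (A (d + 2 * t + 2) k - A (d + 2 * t) k) =
        B n (d + 2 * t + 2) * (A (d + 2 * t + 2) (k - 2) - A (d + 2 * t) (k - 2))
          + (g t - g (t + 1)) := by
    intro t _
    simp only [g, show d + 2 * (t + 1) = d + 2 * t + 2 by ring]
    linear_combination B (n + 2) (d + 2 * t + 2) * hA (d + 2 * t) k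
      - A (d + 2 * t) (k - 2) * hB n (d + 2 * t) hn
  rw [diffSum, sum_congr rfl hterm, sum_add_distrib, sum_range_sub', diffSum]
  simp only [mul_zero, add_zero, g]
  ring

theorem shiftSum_succ_add_two (d N n : ℕ) (k : ℤ) :
    shiftSum A B d (N + 1) (n + 2) k = shiftSum A B d N n (k - 2) + B n d * A d (k - 2) := by
  rw [shiftSum, sum_range_succ', shiftSum]
  congr 1
  refine sum_congr rfl fun t _ => ?_
  rw [show n + 2 - (2 * (t + 1) + 2) = n - (2 * t + 2) by omega]
  congr 2
  push_cast
  ring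

theorem diffSum_eq_shiftSum
    (hB0 : ∀ n k : ℕ, n < k → B n k = 0)
    (hA : ∀ (n : ℕ) (k : ℤ), A (n + 2) k - A n k = ((n : ℝ) + 1) ^ 2 * A n (k - 2))
    (hB : ∀ n k : ℕ, 1 ≤ n → B n k - B n (k + 2) = ((k : ℝ) + 1) ^ 2 * B (n + 2) (k + 2))
    {d : ℕ} (hd : 1 ≤ d) (N : ℕ) :
    ∀ n, n ≤ 2 * N → ∀ k, diffSum A B d N n k = shiftSum A B d N n k := by
  induction N with
  | zero => simp [diffSum, shiftSum]
  | succ N ih =>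
    intro n hn k
    obtain hsmall | ⟨m, rfl, hm⟩ : n ≤ 2 ∨ ∃ m, n = m + 2 ∧ 1 ≤ m :=
      (le_or_gt n 2).imp_right fun h => ⟨n - 2, by omega, by omega⟩
    · rw [diffSum, shiftSum, sum_eq_zero, sum_eq_zero] <;> intro t _
      · rw [hB0 _ d (by omega), zero_mul]
      · rw [hB0 n _ (by omega), zero_mul]
    · have hlast : B m (d + 2 * (N + 1)) = 0 := hB0 _ _ (by omega)
      have hextend : diffSum A B d (N + 1) m (k - 2) = diffSum A B d N m (k - 2) := by
        rw [diffSum, sum_range_succ, hB0 m _ (by omega), zero_mul, add_zero, diffSum]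
      rw [diffSum_add_two hA hB hm, hlast, zero_mul, sub_zero, hextend, ih m (by omega),
        shiftSum_succ_add_two]

end

theorem identity_A_B_second_general
    (A : ℕ → ℤ → ℝ) (B : ℕ → ℕ → ℝ)
    (hB0 : ∀ n k : ℕ, n < k → B n k = 0)
    (hA : ∀ (n : ℕ) (k : ℤ), A (n + 2) k - A n k = ((n : ℝ) + 1) ^ 2 * A n (k - 2))
    (hB : ∀ n k : ℕ, 1 ≤ n → B n k - B n (k + 2) = ((k : ℝ) + 1) ^ 2 * B (n + 2) (k + 2))
    (n d k : ℕ) (hd1 : 1 ≤ d) :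
    ∑ s ∈ (Finset.range (n - d + 1)).filter (fun s => Even s ∧ 2 ≤ s),
        B n (d + s) * (((d + s : ℕ) : ℝ) - 1) ^ 2 * A (d + s - 2) ((k : ℤ) - 2) =
    ∑ s ∈ (Finset.range (n - d + 1)).filter (fun s => Even s ∧ 2 ≤ s),
        B (n - s) d * A d ((k : ℤ) - s) := by
  have hL : n - d + 1 ≤ 2 * n + 2 := by omega
  rw [sum_filter_even_two_le_range _ (fun s hs => by rw [hB0 n _ (by omega)]; ring) hL,
    sum_filter_even_two_le_range _ (fun s hs => by rw [hB0 _ d (by omega), zero_mul]) hL]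
  calc _ = diffSum A B d n n k := by
        refine sum_congr rfl fun t _ => ?_
        rw [show d + (2 * t + 2) - 2 = d + 2 * t by omega, ← add_assoc, hA (d + 2 * t) k]
        push_cast
        ring
    _ = shiftSum A B d n n k := diffSum_eq_shiftSum hB0 hA hB hd1 n n (by omega) k

theorem identity_A_B_second
    (A : ℕ → ℤ → ℝ) (B : ℕ → ℕ → ℝ)
    (hA0 : ∀ (n : ℕ) (k : ℤ), (n : ℤ) < k → A n k = 0)
    (hB0 : ∀ n k : ℕ, n < k → B n k = 0)
    (hA : ∀ (n : ℕ) (k : ℤ), A (n + 2) k - A n k = ((n : ℝ) + 1) ^ 2 * A n (k - 2))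
    (hB : ∀ n k : ℕ, 1 ≤ n → B n k - B n (k + 2) = ((k : ℝ) + 1) ^ 2 * B (n + 2) (k + 2))
    (n d k : ℕ) (hn : 3 ≤ n) (hd1 : 1 ≤ d) (hk1 : 1 ≤ k) (hdn : d ≤ n) :
    ∑ s ∈ (Finset.range (n - d + 1)).filter (fun s => Even s ∧ 2 ≤ s),
        B n (d + s) * (((d + s : ℕ) : ℝ) - 1) ^ 2 * A (d + s - 2) ((k : ℤ) - 2) =
    ∑ s ∈ (Finset.range (n - d + 1)).filter (fun s => Even s ∧ 2 ≤ s),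
        B (n - s) d * A d ((k : ℤ) - s) :=
  identity_A_B_second_general A B hB0 hA hB n d k hd1
end

section
/- Define B(n,k) := (1/((k−1)!·(n−k)!)) · ∫₀^π (sin x)^{k−1} · x^{n−k} dx for integers 1 ≤ k ≤ n, and B(n,0) := B(n,1) = π^n/n!. Then for all n ≥ 1 and k ≥ 0, B(n,k) − B(n,k+2) = (k+1)²·B(n+2,k+2), where B(n,k) := 0 if k > n. -/
/-!
Write `I(j, p) = ∫₀^π sin^j x · x^p dx`, so that `B(n, k) = I(k-1, n-k) / ((k-1)! (n-k)!)`
for `1 ≤ k ≤ n`. Since `(sin^{j+2})'' = (j+1)(j+2) sin^j - (j+2)² sin^{j+2}` and both `sin^{j+2}`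
and its derivative vanish at `0` and `π`, integrating by parts twice against `x^p` gives
`(j+1)(j+2) I(j, p) = (j+2)² I(j+2, p) + p(p-1) I(j+2, p-2)`; dividing by `(j+2)! p!` is the
recurrence for `k ≥ 1`. For `k = 0` the same computation with `sin'' = -sin` leaves the boundary
term `π^p`, which produces `B(n, 0) = π^n / n!`.
-/

open scoped Real

/-- The numbers `B{n,k}`: `B{n,k} = (1/((k-1)!(n-k)!)) ∫₀^π (sin x)^(k-1) x^(n-k) dx`
for `1 ≤ k ≤ n`, `B{n,0} = B{n,1} = π^n/n!`, and `B{n,k} = 0` for `k > n`. -/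
noncomputable def Bnum (n k : ℕ) : ℝ :=
  if n < k then 0
  else if k = 0 then π ^ n / n.factorial
  else (1 / ((k - 1).factorial * (n - k).factorial)) *
    ∫ x in (0 : ℝ)..π, (Real.sin x) ^ (k - 1) * x ^ (n - k)

open Real Set MeasureTheory intervalIntegral
open scoped Nat

theorem integral_deriv_deriv_mul_sub_mul_deriv_deriv {a b : ℝ} {f f' f'' g g' g'' : ℝ → ℝ}
    (hf : ∀ x ∈ uIcc a b, HasDerivAt f (f' x) x) (hf' : ∀ x ∈ uIcc a b, HasDerivAt f' (f'' x) x)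
    (hg : ∀ x ∈ uIcc a b, HasDerivAt g (g' x) x) (hg' : ∀ x ∈ uIcc a b, HasDerivAt g' (g'' x) x)
    (hf'' : IntervalIntegrable f'' volume a b) (hg'' : IntervalIntegrable g'' volume a b) :
    ∫ x in a..b, f'' x * g x - f x * g'' x =
      (f' b * g b - f b * g' b) - (f' a * g a - f a * g' a) := by
  refine integral_eq_sub_of_hasDerivAt (f := fun x => f' x * g x - f x * g' x) (fun x hx => ?_)
    ((hf''.mul_continuousOn (HasDerivAt.continuousOn hg)).sub
      (hg''.continuousOn_mul (HasDerivAt.continuousOn hf)))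
  convert ((hf' x hx).fun_mul (hg x hx)).fun_sub ((hf x hx).fun_mul (hg' x hx)) using 1
  ring

-- For `p < 2` the exponents `p - 1` and `p - 2` are truncated, harmlessly: the terms they occur
-- in then have coefficient `0`.
theorem integral_deriv_deriv_mul_pow {a b : ℝ} {f f' f'' : ℝ → ℝ} (p : ℕ)
    (hf : ∀ x ∈ uIcc a b, HasDerivAt f (f' x) x) (hf' : ∀ x ∈ uIcc a b, HasDerivAt f' (f'' x) x)
    (hf'' : IntervalIntegrable f'' volume a b) :
    ∫ x in a..b, f'' x * x ^ p =
      (f' b * b ^ p - f b * (p * b ^ (p - 1))) - (f' a * a ^ p - f a * (p * a ^ (p - 1)))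
        + p * (p - 1 : ℕ) * ∫ x in a..b, f x * x ^ (p - 2) := by
  have hg'' : ∀ x, HasDerivAt (fun x : ℝ => p * x ^ (p - 1)) (p * (p - 1 : ℕ) * x ^ (p - 2)) x :=
    fun x => by simpa [mul_assoc, Nat.sub_sub] using (hasDerivAt_pow (p - 1) x).const_mul (p : ℝ)
  have hfi : IntervalIntegrable f volume a b :=
    (HasDerivAt.continuousOn hf).intervalIntegrable
  have key := integral_deriv_deriv_mul_sub_mul_deriv_deriv hf hf' (fun x _ => hasDerivAt_pow p x)
    (fun x _ => hg'' x) hf'' (Continuous.intervalIntegrable (by fun_prop) a b)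
  rw [integral_sub (hf''.mul_continuousOn (by fun_prop)) (hfi.mul_continuousOn (by fun_prop))] at key
  simp only [mul_left_comm (f _), intervalIntegral.integral_const_mul] at key
  linarith

noncomputable def sinMoment (j p : ℕ) : ℝ := ∫ x in (0 : ℝ)..π, sin x ^ j * x ^ p

theorem sinMoment_recurrence (j p : ℕ) :
    (j + 1) * (j + 2) * sinMoment j p =
      (j + 2) ^ 2 * sinMoment (j + 2) p + p * (p - 1 : ℕ) * sinMoment (j + 2) (p - 2) := by
  have hf (x : ℝ) :
      HasDerivAt (fun x => sin x ^ (j + 2)) (((j : ℝ) + 2) * sin x ^ (j + 1) * cos x) x := by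
    simpa using (hasDerivAt_sin x).fun_pow (j + 2)
  have hf' (x : ℝ) : HasDerivAt (fun x => ((j : ℝ) + 2) * sin x ^ (j + 1) * cos x)
      (((j : ℝ) + 2) * (j + 1) * sin x ^ j - ((j : ℝ) + 2) ^ 2 * sin x ^ (j + 2)) x := by
    refine ((((hasDerivAt_sin x).fun_pow (j + 1)).const_mul ((j : ℝ) + 2)).fun_mul
      (hasDerivAt_cos x)).congr_deriv ?_
    push_cast
    linear_combination ((j : ℝ) + 2) * (j + 1) * sin x ^ j * Real.sin_sq_add_cos_sq x
  have key := integral_deriv_deriv_mul_pow p (fun x _ => hf x) (fun x _ => hf' x)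
    (Continuous.intervalIntegrable (by fun_prop) 0 π)
  simp only [sin_zero, sin_pi, zero_pow (Nat.succ_ne_zero _), mul_zero, zero_mul, sub_zero,
    zero_add, sub_mul, mul_assoc] at key
  rw [integral_sub (Continuous.intervalIntegrable (by fun_prop) 0 π)
    (Continuous.intervalIntegrable (by fun_prop) 0 π)] at key
  simp only [intervalIntegral.integral_const_mul] at key
  unfold sinMoment
  linear_combination key

theorem sinMoment_one (p : ℕ) (hp : 1 ≤ p) :
    sinMoment 1 p = π ^ p - p * (p - 1 : ℕ) * sinMoment 1 (p - 2) := by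
  have key := integral_deriv_deriv_mul_pow p (fun x _ => hasDerivAt_sin x)
    (fun x _ => hasDerivAt_cos x) (Continuous.intervalIntegrable (by fun_prop) 0 π)
  simp only [sin_zero, sin_pi, cos_zero, cos_pi, zero_pow (by omega : p ≠ 0), neg_mul,
    intervalIntegral.integral_neg, zero_mul, mul_zero, sub_zero, one_mul] at key
  simp only [sinMoment, pow_one]
  linear_combination -key

theorem Bnum_of_lt {n k : ℕ} (h : n < k) : Bnum n k = 0 := if_pos h

theorem Bnum_zero (n : ℕ) : Bnum n 0 = π ^ n / n ! := by
  simp [Bnum]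

theorem Bnum_succ_add (j p : ℕ) : Bnum (j + 1 + p) (j + 1) = sinMoment j p / (j ! * p !) := by
  rw [Bnum, if_neg (by omega), if_neg (by omega), Nat.add_sub_cancel, Nat.add_sub_cancel_left,
    one_div_mul_eq_div, sinMoment]

theorem Bnum_zero_sub_Bnum_two {n : ℕ} (hn : 1 ≤ n) : Bnum n 0 - Bnum n 2 = Bnum (n + 2) 2 := by
  have hI := sinMoment_one n hn
  rw [Bnum_zero, show n + 2 = 1 + 1 + n by ring, Bnum_succ_add]
  obtain rfl | hn := hn.eq_or_lt
  · simp [Bnum_of_lt, hI]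
  obtain ⟨m, rfl⟩ := Nat.exists_eq_add_of_le' hn
  rw [show m + 2 = 1 + 1 + m by ring, Bnum_succ_add, show 1 + 1 + m = m + 2 by ring,
    Nat.factorial_succ (m + 1), Nat.factorial_succ m, Nat.factorial_one]
  push_cast at hI ⊢
  field_simp
  linear_combination -hI

theorem Bnum_eq_sq_mul_add {n k : ℕ} (hk : 1 ≤ k) :
    Bnum n k = (k + 1) ^ 2 * Bnum (n + 2) (k + 2) + Bnum n (k + 2) := by
  rcases lt_or_ge n k with hnk | hkn
  · simp [Bnum_of_lt, hnk, (by omega : n < k + 2)]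
  obtain ⟨j, rfl⟩ := Nat.exists_eq_add_of_le' hk
  obtain ⟨p, rfl⟩ := Nat.exists_eq_add_of_le hkn
  have hI := sinMoment_recurrence j p
  rw [Bnum_succ_add, show j + 1 + p + 2 = j + 2 + 1 + p by ring, show j + 1 + 2 = j + 2 + 1 by ring,
    Bnum_succ_add, Nat.factorial_succ (j + 1), Nat.factorial_succ j]
  rcases lt_or_ge p 2 with hp | hp
  · have hcoef : (p : ℝ) * (p - 1 : ℕ) = 0 := by interval_cases p <;> simp
    rw [hcoef, zero_mul, add_zero] at hI
    rw [Bnum_of_lt (by omega)]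
    push_cast
    field_simp
    refine mul_left_cancel₀ (by positivity : (j : ℝ) + 2 ≠ 0) ?_
    linear_combination hI
  obtain ⟨q, rfl⟩ := Nat.exists_eq_add_of_le' hp
  rw [show j + 1 + (q + 2) = j + 2 + 1 + q by ring, Bnum_succ_add, Nat.factorial_succ (j + 1),
    Nat.factorial_succ j, Nat.factorial_succ (q + 1), Nat.factorial_succ q]
  rw [Nat.add_sub_cancel, show q + 2 - 1 = q + 1 by omega] at hI
  push_cast at hI ⊢
  field_simp
  linear_combination hI

theorem Bnum_recurrence (n k : ℕ) (hn : 1 ≤ n) :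
    Bnum n k - Bnum n (k + 2) = ((k : ℝ) + 1) ^ 2 * Bnum (n + 2) (k + 2) := by
  rcases k.eq_zero_or_pos with rfl | hk
  · simpa using Bnum_zero_sub_Bnum_two hn
  · rw [Bnum_eq_sq_mul_add hk]
    ring
end

section
/- Define, for a real parameter α > 0 and real x ∈ (−π/2, π/2), F(x) := ∫_{−π/2}^x (cos y)^α dy, and for real ν, κ with ν − κ a nonnegative integer and κ > −1/α, define B(ν,κ) := (α^{ν−κ}/(Γ(κ)·(ν−κ)!)) · ∫_{−π/2}^{π/2} (cos x)^{ακ} · (F(x))^{ν−κ} dx. Then for all such ν, κ with κ > 0 and ν − κ − 2 ∈ {−2, −1, 0, 1, 2, ...} (using the convention B(ν,κ) = 0 when ν − κ is a negative integer): B(ν, κ+2) + B(ν, κ) = ((κ − 1/α)·Γ(κ − 2/α)/Γ(κ+1)) · B(ν − 2/α, κ − 2/α), provided κ − 2/α > 0. -/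
open scoped Real

/-- `F(x) = ∫_{-π/2}^x (cos y)^α dy`. -/
noncomputable def Fint (α x : ℝ) : ℝ := ∫ y in (-(π / 2))..x, (Real.cos y) ^ α

/-- `B{ν,κ} = (α^(ν-κ)/(Γ(κ)(ν-κ)!)) ∫_{-π/2}^{π/2} (cos x)^(ακ) F(x)^(ν-κ) dx`
for `ν - κ ∈ ℕ₀`, and `0` when `ν - κ` is a negative integer. -/
noncomputable def Bint (α ν κ : ℝ) : ℝ :=
  if ν - κ < 0 then 0
  else
    α ^ (ν - κ) / (Real.Gamma κ * (Nat.factorial ⌊ν - κ⌋₊)) *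
      ∫ x in (-(π / 2))..(π / 2), (Real.cos x) ^ (α * κ) * (Fint α x) ^ (⌊ν - κ⌋₊ : ℕ)

/-!
With `I(a, j) = ∫_{-π/2}^{π/2} cos^a x · F(x)^j dx`, all three `B` values are multiples of such
integrals, with `a = ακ + 2α`, `ακ` and `ακ - 2`. Differentiating
`(a + α) sin x cos^(a-1) x F(x)^j + j cos^(a+α) x F(x)^(j-1)`, which vanishes at `±π/2`, gives
`(a - 1)(a + α) I(a - 2, j) = a (a + α) I(a, j) + j (j - 1) I(a + 2α, j - 2)`;
with `Γ(κ + 2) = (κ + 1) κ Γ(κ)` this is the recurrence.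
-/

open Real Set intervalIntegral

noncomputable def cosFintIntegral (α a : ℝ) (j : ℕ) : ℝ :=
  ∫ x in (-(π / 2))..(π / 2), cos x ^ a * Fint α x ^ j

section

variable {α a : ℝ}

lemma continuous_cos_rpow {p : ℝ} (hp : 0 ≤ p) : Continuous fun x : ℝ => cos x ^ p :=
  continuous_cos.rpow_const fun _ => Or.inr hp

lemma hasDerivAt_Fint (hα : 0 ≤ α) (x : ℝ) : HasDerivAt (Fint α) (cos x ^ α) x :=
  ((continuous_cos_rpow hα).integral_hasStrictDerivAt _ x).hasDerivAt

lemma continuous_Fint (hα : 0 ≤ α) : Continuous (Fint α) :=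
  continuous_iff_continuousAt.2 fun x => (hasDerivAt_Fint hα x).continuousAt

-- The two terms in `sin x cos^(a+α-1) x F(x)^(j-1)`, from differentiating `F^j` and `cos^(a+α)`,
-- cancel; `sin² = 1 - cos²` turns the rest into the three integrands.
lemma hasDerivAt_cosFint_primitive (hα : 0 ≤ α) (j : ℕ) {x : ℝ}
    (hx : x ∈ Ioo (-(π / 2)) (π / 2)) :
    HasDerivAt
      (fun y => (a + α) * (sin y * cos y ^ (a - 1) * Fint α y ^ j)
        + j * (cos y ^ (a + α) * Fint α y ^ (j - 1)))
      (a * (a + α) * (cos x ^ a * Fint α x ^ j)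
        - (a - 1) * (a + α) * (cos x ^ (a - 2) * Fint α x ^ j)
        + j * (j - 1) * (cos x ^ (a + 2 * α) * Fint α x ^ (j - 2))) x := by
  have hc : 0 < cos x := cos_pos_of_mem_Ioo hx
  have hcos (p : ℝ) : HasDerivAt (fun y => cos y ^ p) (p * cos x ^ (p - 1) * -sin x) x :=
    (hasDerivAt_rpow_const (Or.inl hc.ne')).comp x (hasDerivAt_cos x)
  have hcoef : (j : ℝ) * ((j - 1 : ℕ) : ℝ) = j * (j - 1) := by
    cases j <;> simp
  have hF := (hasDerivAt_Fint hα x).pow j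
  have hF' := (hasDerivAt_Fint hα x).pow (j - 1)
  rw [Nat.sub_sub, one_add_one_eq_two] at hF'
  refine ((((hasDerivAt_sin x).mul (hcos (a - 1))).mul hF).const_mul (a + α) |>.add
    (((hcos (a + α)).mul hF').const_mul (j : ℝ))).congr_deriv ?_
  rw [← hcoef]
  simp only [Pi.mul_apply, Pi.pow_apply, rpow_sub_one hc.ne', rpow_sub hc, rpow_add hc, two_mul, rpow_two]
  field_simp
  linear_combination -((a - 1) * (a + α) * Fint α x ^ j) * sin_sq_add_cos_sq x

lemma cosFintIntegral_recurrence (hα : 0 ≤ α) (ha : 2 ≤ a) (j : ℕ) :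
    (a - 1) * (a + α) * cosFintIntegral α (a - 2) j =
      a * (a + α) * cosFintIntegral α a j
        + j * (j - 1) * cosFintIntegral α (a + 2 * α) (j - 2) := by
  have hF := continuous_Fint hα
  have hint {p : ℝ} (hp : 0 ≤ p) (k : ℕ) :
      IntervalIntegrable (fun x => cos x ^ p * Fint α x ^ k) MeasureTheory.volume
        (-(π / 2)) (π / 2) :=
    ((continuous_cos_rpow hp).mul (hF.pow k)).intervalIntegrable _ _
  have h₀ := hint (by linarith : 0 ≤ a - 2) j
  have h₁ := hint (by linarith : 0 ≤ a) j
  have h₂ := hint (by linarith : 0 ≤ a + 2 * α) (j - 2)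
  have hFTC := integral_eq_sub_of_hasDerivAt_of_le (by linarith [pi_pos])
    (Continuous.continuousOn (by fun_prop (disch := linarith)))
    (fun x hx => hasDerivAt_cosFint_primitive (a := a) hα j hx)
    (((h₁.const_mul _).sub (h₀.const_mul _)).add (h₂.const_mul _))
  rw [integral_add ((h₁.const_mul _).sub (h₀.const_mul _)) (h₂.const_mul _),
    integral_sub (h₁.const_mul _) (h₀.const_mul _),
    integral_const_mul, integral_const_mul, integral_const_mul] at hFTC
  simp only [sin_pi_div_two, sin_neg, cos_pi_div_two, cos_neg, zero_rpow (by linarith : a - 1 ≠ 0),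
    zero_rpow (by linarith : a + α ≠ 0), mul_zero, zero_mul, add_zero, sub_self] at hFTC
  unfold cosFintIntegral
  linarith

end

open Nat in
lemma Bint_of_sub_eq_natCast {α ν κ : ℝ} {j : ℕ} (h : ν - κ = j) :
    Bint α ν κ = α ^ j / (Gamma κ * j !) * cosFintIntegral α (α * κ) j := by
  rw [Bint, if_neg (by simp [h]), h, floor_natCast, rpow_natCast, cosFintIntegral]

-- For `j < 2` both sides vanish: `Bint` is `0` when `ν - κ < 0`, and so is `j (j - 1)`.
open Nat in
lemma sq_mul_Bint_add_two {α ν κ : ℝ} {j : ℕ} (h : ν - κ = j) :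
    α ^ 2 * Bint α ν (κ + 2) =
      j * (j - 1) * α ^ j / (Gamma (κ + 2) * j !) * cosFintIntegral α (α * (κ + 2)) (j - 2) := by
  rcases j with _ | _ | m
  · rw [Bint, if_pos (by push_cast at h; linarith)]; simp
  · rw [Bint, if_pos (by push_cast at h; linarith)]; simp
  · have hm : ν - (κ + 2) = m := by push_cast at h; linarith
    rw [Bint_of_sub_eq_natCast hm, show m + 1 + 1 - 2 = m from rfl, factorial_succ, factorial_succ]
    push_cast
    field_simp
    ring

theorem Bint_recurrence_general (α ν κ : ℝ) (hα : 0 < α)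
    (hνκ : ∃ j : ℕ, ν - κ = j) (hκα : 0 < κ - 2 / α) :
    Bint α ν (κ + 2) + Bint α ν κ =
      ((κ - 1 / α) * Real.Gamma (κ - 2 / α) / Real.Gamma (κ + 1)) *
        Bint α (ν - 2 / α) (κ - 2 / α) := by
  obtain ⟨j, hj⟩ := hνκ
  have hκ : 0 < κ := by linarith [div_pos two_pos hα]
  have hΓ := (Gamma_pos_of_pos hκ).ne'
  have hΓ' := (Gamma_pos_of_pos hκα).ne'
  have hΓ₂ : Gamma (κ + 2) = (κ + 1) * (κ * Gamma κ) := by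
    rw [show κ + 2 = (κ + 1) + 1 by ring, Gamma_add_one (by linarith), Gamma_add_one hκ.ne']
  have hexp : α * (κ - 2 / α) = α * κ - 2 := by field_simp
  have hIBP := cosFintIntegral_recurrence hα.le (by nlinarith [mul_pos hα hκα] : 2 ≤ α * κ) j
  rw [show α * κ + 2 * α = α * (κ + 2) by ring] at hIBP
  have hB₂ := sq_mul_Bint_add_two (α := α) hj
  rw [hΓ₂] at hB₂
  rw [Bint_of_sub_eq_natCast (by linarith : ν - 2 / α - (κ - 2 / α) = j),
    hexp, Bint_of_sub_eq_natCast hj, Gamma_add_one hκ.ne']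
  generalize Gamma (κ - 2 / α) = Γ' at *
  field_simp at hB₂ ⊢
  refine mul_left_cancel₀ (by positivity : α * (κ + 1) ≠ 0) ?_
  linear_combination hB₂ - α ^ j * hIBP

theorem Bint_recurrence (α ν κ : ℝ) (hα : 0 < α)
    (hνκ : ∃ j : ℕ, ν - κ = j) (hκ : 0 < κ) (hκα : 0 < κ - 2 / α) :
    Bint α ν (κ + 2) + Bint α ν κ =
      ((κ - 1 / α) * Real.Gamma (κ - 2 / α) / Real.Gamma (κ + 1)) *
        Bint α (ν - 2 / α) (κ - 2 / α) :=
  Bint_recurrence_general α ν κ hα hνκ hκα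
end

section
/- Let α > 0 and let A(ν,κ) and B(ν,κ) be real-valued functions defined for pairs (ν,κ) of reals with ν − κ ∈ ℕ₀, extended by A(ν,κ) = B(ν,κ) = 0 when ν − κ is a negative integer, and satisfying: B(ν,κ+2) + B(ν,κ) = ((κ − 1/α)·Γ(κ − 2/α)/Γ(κ+1)) · B(ν − 2/α, κ − 2/α) and A(ν−2,κ) + A(ν,κ) = ((ν + 1/α)·Γ(ν)/Γ(ν + 2/α + 1)) · A(ν + 2/α, κ + 2/α), for all admissible arguments. Then for all reals n, d, k with n − d ∈ ℕ₀ and d − k ∈ ℕ₀: ∑_{s even, 0 ≤ s ≤ d−k, m := d−s} B(n,m)·((m + 1/α)·Γ(m)/Γ(m + 1 + 2/α))·A(m + 2/α, k + 2/α) = ∑_{q even, 0 ≤ q ≤ d−k} B(n − q/α, d − q − q/α)·A(d − q − q/α, k − q/α). -/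
/-!
Write the even index as `s = 2t`. By the recurrence for `A`, the `t`-th term on the left is
`B(n, d-2t) (A(d-2t-2, k) + A(d-2t, k))`; regrouping (summation by parts, the boundary term
vanishing because `d - 2t - 2 < k` at the end) turns the left side into
`B(n,d) A(d,k) + ∑ (B(n, d-2t) + B(n, d-2t-2)) A(d-2t-2, k)`, and the recurrence for `B` turns
the remaining sum into the left side for `(n - 2/α, d - 2 - 2/α, k - 2/α)`. The right side obeys the
same recursion by a plain index shift, so induction on `⌊(d-k)/2⌋` finishes.
-/

open Real Finset

theorem Finset.sum_range_succ_filter_even {M : Type*} [AddCommMonoid M] (m : ℕ) (f : ℕ → M) :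
    ∑ s ∈ (range (m + 1)).filter Even, f s = ∑ t ∈ range (m / 2 + 1), f (2 * t) := by
  refine sum_nbij' (· / 2) (2 * ·) ?_ ?_ ?_ ?_ ?_ <;>
    simp only [mem_filter, mem_range, Nat.even_iff] <;> intro x hx
  all_goals first | omega | (congr 1; omega)

theorem Finset.sum_range_succ_mul_add_shift {R : Type*} [CommSemiring R] (a b : ℕ → R) (T : ℕ)
    (ha : a (T + 1) = 0) :
    ∑ t ∈ range (T + 1), b t * (a (t + 1) + a t) =
      b 0 * a 0 + ∑ t ∈ range T, (b t + b (t + 1)) * a (t + 1) := by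
  simp only [mul_add, add_mul, sum_add_distrib]
  rw [sum_range_succ _ T, ha, mul_zero, add_zero, sum_range_succ' (fun t => b t * a t)]
  ring

namespace BetaIdentity

noncomputable def betaWeight (α m : ℝ) : ℝ :=
  (m + 1 / α) * Gamma m / Gamma (m + 1 + 2 / α)

def ARecurrence (α : ℝ) (A : ℝ → ℝ → ℝ) : Prop :=
  ∀ ν κ : ℝ, (∃ j : ℤ, ν - κ = j) →
    A (ν - 2) κ + A ν κ = (ν + 1 / α) * Gamma ν / Gamma (ν + 2 / α + 1) * A (ν + 2 / α) (κ + 2 / α)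

def BRecurrence (α : ℝ) (B : ℝ → ℝ → ℝ) : Prop :=
  ∀ ν κ : ℝ, (∃ j : ℤ, ν - κ = j) →
    B ν (κ + 2) + B ν κ = (κ - 1 / α) * Gamma (κ - 2 / α) / Gamma (κ + 1) * B (ν - 2 / α) (κ - 2 / α)

def VanishesBelowDiagonal (A : ℝ → ℝ → ℝ) : Prop :=
  ∀ ν κ : ℝ, (∃ j : ℤ, ν - κ = j ∧ j < 0) → A ν κ = 0

-- The two sides of the identity with `s = 2t` and `T = ⌊(d - k)/2⌋`.
noncomputable def lhsSum (α : ℝ) (A B : ℝ → ℝ → ℝ) (n d k : ℝ) (T : ℕ) : ℝ :=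
  ∑ t ∈ range (T + 1),
    B n (d - 2 * t) * betaWeight α (d - 2 * t) * A (d - 2 * t + 2 / α) (k + 2 / α)

noncomputable def rhsSum (α : ℝ) (A B : ℝ → ℝ → ℝ) (n d k : ℝ) (T : ℕ) : ℝ :=
  ∑ t ∈ range (T + 1),
    B (n - 2 * t / α) (d - 2 * t - 2 * t / α) * A (d - 2 * t - 2 * t / α) (k - 2 * t / α)

variable {α : ℝ} {A B : ℝ → ℝ → ℝ}

theorem ARecurrence.betaWeight_mul (hA : ARecurrence α A) {m k : ℝ} (hmk : ∃ j : ℤ, m - k = j) :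
    betaWeight α m * A (m + 2 / α) (k + 2 / α) = A (m - 2) k + A m k := by
  rw [hA m k hmk, betaWeight, add_right_comm m 1]

theorem BRecurrence.add_sub_two (hB : BRecurrence α B) {ν m : ℝ} (hνm : ∃ j : ℤ, ν - m = j) :
    B ν m + B ν (m - 2) = betaWeight α (m - 2 - 2 / α) * B (ν - 2 / α) (m - 2 - 2 / α) := by
  obtain ⟨j, hj⟩ := hνm
  have h := hB ν (m - 2) ⟨j + 2, by push_cast; linarith⟩
  rw [sub_add_cancel] at h
  rw [h, betaWeight, show m - 2 - 2 / α + 1 / α = m - 2 - 1 / α by ring,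
    show m - 2 - 2 / α + 1 + 2 / α = m - 2 + 1 by ring]

theorem rhsSum_succ (n d k : ℝ) (T : ℕ) :
    rhsSum α A B n d k (T + 1) =
      B n d * A d k + rhsSum α A B (n - 2 / α) (d - 2 - 2 / α) (k - 2 / α) T := by
  rw [rhsSum, sum_range_succ', add_comm, rhsSum]
  congr 1
  · simp
  · refine sum_congr rfl fun t _ => ?_
    push_cast
    ring_nf

theorem lhsSum_zero (hA : ARecurrence α A) (hA0 : VanishesBelowDiagonal A) {n d k : ℝ} {r : ℕ}
    (hr : r < 2) (hdk : d - k = r) :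
    lhsSum α A B n d k 0 = B n d * A d k := by
  have hvanish : A (d - 2) k = 0 := hA0 _ _ ⟨r - 2, by push_cast; linarith, by omega⟩
  rw [lhsSum, sum_range_one, Nat.cast_zero, mul_zero, sub_zero, mul_assoc,
    hA.betaWeight_mul ⟨r, hdk⟩, hvanish, zero_add]

theorem lhsSum_succ (hA : ARecurrence α A) (hB : BRecurrence α B) (hA0 : VanishesBelowDiagonal A)
    {n d k : ℝ} {T r : ℕ} (hr : r < 2) (hnd : ∃ j : ℤ, n - d = j)
    (hdk : d - k = 2 * (T + 1) + r) :
    lhsSum α A B n d k (T + 1) =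
      B n d * A d k + lhsSum α A B (n - 2 / α) (d - 2 - 2 / α) (k - 2 / α) T := by
  obtain ⟨a, ha⟩ := hnd
  have hvanish : A (d - 2 * ↑(T + 1 + 1)) k = 0 :=
    hA0 _ _ ⟨r - 2, by push_cast; linarith, by omega⟩
  calc lhsSum α A B n d k (T + 1)
      = ∑ t ∈ range (T + 1 + 1),
          B n (d - 2 * t) * (A (d - 2 * ↑(t + 1)) k + A (d - 2 * t) k) := by
        refine sum_congr rfl fun t _ => ?_
        rw [mul_assoc, hA.betaWeight_mul ⟨2 * (T + 1) + r - 2 * t, by push_cast; linarith⟩]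
        push_cast
        ring_nf
    _ = B n d * A d k + ∑ t ∈ range (T + 1),
          (B n (d - 2 * t) + B n (d - 2 * ↑(t + 1))) * A (d - 2 * ↑(t + 1)) k := by
        rw [sum_range_succ_mul_add_shift (fun t => A (d - 2 * t) k) (fun t => B n (d - 2 * t))
          _ hvanish]
        simp
    _ = B n d * A d k + lhsSum α A B (n - 2 / α) (d - 2 - 2 / α) (k - 2 / α) T := by
        congr 1
        refine sum_congr rfl fun t _ => ?_
        rw [Nat.cast_succ, show d - 2 * (t + 1 : ℝ) = d - 2 * t - 2 by ring,
          hB.add_sub_two ⟨a + 2 * t, by push_cast; linarith⟩]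
        ring_nf

theorem lhsSum_eq_rhsSum (hA : ARecurrence α A) (hB : BRecurrence α B)
    (hA0 : VanishesBelowDiagonal A) (T : ℕ) {r : ℕ} (hr : r < 2) :
    ∀ n d k : ℝ, (∃ j : ℤ, n - d = j) → d - k = 2 * T + r →
      lhsSum α A B n d k T = rhsSum α A B n d k T := by
  induction T with
  | zero =>
    intro n d k _ hdk
    rw [lhsSum_zero hA hA0 hr (by simpa using hdk), rhsSum]
    simp
  | succ T ih =>
    intro n d k ⟨a, ha⟩ hdk
    rw [lhsSum_succ hA hB hA0 hr ⟨a, ha⟩ (by exact_mod_cast hdk), rhsSum_succ,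
      ih _ _ _ ⟨a + 2, by push_cast; linarith⟩ (by push_cast at hdk ⊢; linarith)]

end BetaIdentity

open BetaIdentity in
theorem beta_main_identity_general (α : ℝ)
    (A B : ℝ → ℝ → ℝ)
    (hA0 : ∀ ν κ : ℝ, (∃ j : ℤ, ν - κ = j ∧ j < 0) → A ν κ = 0)
    (hB : ∀ ν κ : ℝ, (∃ j : ℤ, ν - κ = j) →
      B ν (κ + 2) + B ν κ =
        (κ - 1 / α) * Real.Gamma (κ - 2 / α) / Real.Gamma (κ + 1) *
          B (ν - 2 / α) (κ - 2 / α))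
    (hA : ∀ ν κ : ℝ, (∃ j : ℤ, ν - κ = j) →
      A (ν - 2) κ + A ν κ =
        (ν + 1 / α) * Real.Gamma ν / Real.Gamma (ν + 2 / α + 1) *
          A (ν + 2 / α) (κ + 2 / α))
    (n d k : ℝ) (a b : ℕ) (hnd : n - d = a) (hdk : d - k = b) :
    ∑ s ∈ (Finset.range (b + 1)).filter (fun s => Even s),
        B n (d - s) *
          ((d - s + 1 / α) * Real.Gamma (d - s) / Real.Gamma (d - s + 1 + 2 / α)) *
          A (d - s + 2 / α) (k + 2 / α) =
    ∑ q ∈ (Finset.range (b + 1)).filter (fun q => Even q),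
        B (n - q / α) (d - q - q / α) * A (d - q - q / α) (k - q / α) := by
  have key := lhsSum_eq_rhsSum hA hB hA0 (b / 2) (Nat.mod_lt b two_pos) n d k ⟨a, hnd⟩
    (by rw [hdk]; exact_mod_cast (Nat.div_add_mod b 2).symm)
  rw [sum_range_succ_filter_even, sum_range_succ_filter_even]
  push_cast
  exact key

theorem beta_main_identity (α : ℝ) (hα : 0 < α)
    (A B : ℝ → ℝ → ℝ)
    (hA0 : ∀ ν κ : ℝ, (∃ j : ℤ, ν - κ = j ∧ j < 0) → A ν κ = 0)
    (hB0 : ∀ ν κ : ℝ, (∃ j : ℤ, ν - κ = j ∧ j < 0) → B ν κ = 0)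
    (hB : ∀ ν κ : ℝ, (∃ j : ℤ, ν - κ = j) →
      B ν (κ + 2) + B ν κ =
        (κ - 1 / α) * Real.Gamma (κ - 2 / α) / Real.Gamma (κ + 1) *
          B (ν - 2 / α) (κ - 2 / α))
    (hA : ∀ ν κ : ℝ, (∃ j : ℤ, ν - κ = j) →
      A (ν - 2) κ + A ν κ =
        (ν + 1 / α) * Real.Gamma ν / Real.Gamma (ν + 2 / α + 1) *
          A (ν + 2 / α) (κ + 2 / α))
    (n d k : ℝ) (a b : ℕ) (hnd : n - d = a) (hdk : d - k = b) :
    ∑ s ∈ (Finset.range (b + 1)).filter (fun s => Even s),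
        B n (d - s) *
          ((d - s + 1 / α) * Real.Gamma (d - s) / Real.Gamma (d - s + 1 + 2 / α)) *
          A (d - s + 2 / α) (k + 2 / α) =
    ∑ q ∈ (Finset.range (b + 1)).filter (fun q => Even q),
        B (n - q / α) (d - q - q / α) * A (d - q - q / α) (k - q / α) :=
  beta_main_identity_general α A B hA0 hB hA n d k a b hnd hdk
end

section
/- Let (A(n,k)) and (B(n,k)) be real arrays (A(n,k) defined for n ∈ ℕ₀, k ∈ ℤ, k ≤ n; B(n,k) for n ∈ ℕ, k ∈ ℕ₀, k ≤ n; both zero for k > n) satisfying A(n+2,k) − A(n,k) = (n+1)²·A(n,k−2) and B(n,k) − B(n,k+2) = (k+1)²·B(n+2,k+2). Suppose additionally that for all n ≥ 1 and 1 ≤ k ≤ n−1: ∑_{j even, k ≤ j ≤ n} B(n,j)·(j−1)²·A(j−2,k−2) = π^{n−k}/(n−k)! and ∑_{j odd, k ≤ j ≤ n} B(n,j)·(j−1)²·A(j−2,k−2) = π^{n−k}/(n−k)! (with the convention 0²·A(−1,−1) := A(1,1)). Then for all d ≥ 1 and ℓ ≥ 1: ∑_{r even, d ≤ r ≤ d+ℓ}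 B(r,d)·A(d, r−ℓ) = π^ℓ/ℓ! and ∑_{r odd, d ≤ r ≤ d+ℓ} B(r,d)·A(d, r−ℓ) = π^ℓ/ℓ!. -/
/-!
The `B`-recurrence reads `(j - 1)² B(n, j) = B(n-2, j-2) - B(n-2, j)`. Summing by parts over
`d < j ≤ n`, `j ≡ d (mod 2)`, and applying the `A`-recurrence to the differences
`A(j, t) - A(j-2, t)` turns `∑ B(n, j) (j - 1)² A(j-2, t)` into `B(n-2, d) A(d, t)` plus the same sum
for `(n-2, t-2)`. Iterating, it equals `∑ B(r, d) A(d, t - n + 2 + r)` over `d ≤ r ≤ n - 2`,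
`r ≡ n (mod 2)`. For `t = k - 2` and `n = k + ℓ` the first sum is the hypothesis at `(n, k)` and the
second is the sum of the theorem; `k = d + 1` and `k = d + 2` give the two parity classes of `r`.
-/

open scoped Real
open Finset

theorem Finset.sum_range_succ_sub_mul {R : Type*} [Ring R] (a b : ℕ → R) (m : ℕ) :
    ∑ i ∈ range (m + 1), (b i - b (i + 1)) * a i =
      b 0 * a 0 + ∑ i ∈ range m, b (i + 1) * (a (i + 1) - a i) - b (m + 1) * a m := by
  simp only [sub_mul, mul_sub, sum_sub_distrib]
  rw [sum_range_succ', sum_range_succ (fun i => b (i + 1) * a i)]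
  abel

theorem Finset.sum_eq_sum_range_step_two {M : Type*} [AddCommMonoid M] (f : ℕ → M)
    {s : Finset ℕ} {a m : ℕ} (hs : ∀ j, j ∈ s ↔ a ≤ j ∧ j < a + 2 * m ∧ j % 2 = a % 2) :
    ∑ j ∈ s, f j = ∑ i ∈ range m, f (a + 2 * i) := by
  symm
  refine sum_nbij' (fun i => a + 2 * i) (fun j => (j - a) / 2) ?_ ?_ ?_ ?_ (fun _ _ => rfl)
  all_goals intro x hx; simp only [mem_range, hs] at hx ⊢; omega

section Recurrences

variable {A : ℕ → ℤ → ℝ} {B : ℕ → ℕ → ℝ}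

/-- `c + 2 * m` is the top row `n`, written so that induction on `m` lowers it by 2. -/
theorem sum_range_B_mul_A
    (hB0 : ∀ n k : ℕ, n < k → B n k = 0)
    (hA : ∀ (n : ℕ) (k : ℤ), A (n + 2) k - A n k = ((n : ℝ) + 1) ^ 2 * A n (k - 2))
    (hB : ∀ n k : ℕ, 1 ≤ n → B n k - B n (k + 2) = ((k : ℝ) + 1) ^ 2 * B (n + 2) (k + 2))
    {c d : ℕ} (hc : 1 ≤ c) (hcd : c ≤ d + 1) (m : ℕ) (t : ℤ) :
    ∑ i ∈ range m, B (c + 2 * m) (d + 2 * i + 2) * (((d + 2 * i : ℕ) : ℝ) + 1) ^ 2 * A (d + 2 * i) t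
      = ∑ i ∈ range m, B (c + 2 * i) d * A d (t + 2 * i + 2 - 2 * m) := by
  induction m generalizing t with
  | zero => simp
  | succ m ih =>
    have hB' : ∀ i, B (c + 2 * (m + 1)) (d + 2 * i + 2) * (((d + 2 * i : ℕ) : ℝ) + 1) ^ 2 =
        B (c + 2 * m) (d + 2 * i) - B (c + 2 * m) (d + 2 * (i + 1)) := by
      intro i
      rw [show c + 2 * (m + 1) = c + 2 * m + 2 by ring, show d + 2 * (i + 1) = d + 2 * i + 2 by ring,
        hB (c + 2 * m) (d + 2 * i) (by omega), mul_comm]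
    have hA' : ∀ i, A (d + 2 * (i + 1)) t - A (d + 2 * i) t =
        (((d + 2 * i : ℕ) : ℝ) + 1) ^ 2 * A (d + 2 * i) (t - 2) := fun i => hA (d + 2 * i) t
    have hvanish : B (c + 2 * m) (d + 2 * (m + 1)) = 0 := hB0 _ _ (by omega)
    calc _ = ∑ i ∈ range (m + 1),
          (B (c + 2 * m) (d + 2 * i) - B (c + 2 * m) (d + 2 * (i + 1))) * A (d + 2 * i) t := by
          simp only [hB']
      _ = B (c + 2 * m) d * A d t + ∑ i ∈ range m, B (c + 2 * m) (d + 2 * i + 2) *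
            (((d + 2 * i : ℕ) : ℝ) + 1) ^ 2 * A (d + 2 * i) (t - 2) := by
          rw [sum_range_succ_sub_mul (fun i => A (d + 2 * i) t)
            (fun i => B (c + 2 * m) (d + 2 * i)), hvanish]
          simp only [hA']
          ring_nf
      _ = _ := by
          rw [ih, sum_range_succ, add_comm]
          congr 1
          · refine sum_congr rfl fun i _ => ?_
            push_cast; ring_nf
          · push_cast; ring_nf

theorem sum_filter_mod_two_eq
    (hsum_even : ∀ n k : ℕ, 1 ≤ n → 1 ≤ k → k + 1 ≤ n →
      ∑ j ∈ (Icc k n).filter (fun j => Even j),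
          (if j = 1 then B n 1 * A 1 1
           else B n j * ((j : ℝ) - 1) ^ 2 * A (j - 2) ((k : ℤ) - 2)) =
        π ^ (n - k) / (n - k).factorial)
    (hsum_odd : ∀ n k : ℕ, 1 ≤ n → 1 ≤ k → k + 1 ≤ n →
      ∑ j ∈ (Icc k n).filter (fun j => Odd j),
          (if j = 1 then B n 1 * A 1 1
           else B n j * ((j : ℝ) - 1) ^ 2 * A (j - 2) ((k : ℤ) - 2)) =
        π ^ (n - k) / (n - k).factorial)
    (p n k : ℕ) (hn : 1 ≤ n) (hk : 1 ≤ k) (hkn : k + 1 ≤ n) :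
    ∑ j ∈ (Icc k n).filter (fun j => j % 2 = p % 2),
        (if j = 1 then B n 1 * A 1 1
         else B n j * ((j : ℝ) - 1) ^ 2 * A (j - 2) ((k : ℤ) - 2)) =
      π ^ (n - k) / (n - k).factorial := by
  rcases Nat.even_or_odd p with hp | hp
  · rw [← hsum_even n k hn hk hkn]
    congr 1
    refine filter_congr fun j _ => ?_
    rw [Nat.even_iff] at hp ⊢; omega
  · rw [← hsum_odd n k hn hk hkn]
    congr 1
    refine filter_congr fun j _ => ?_
    rw [Nat.odd_iff] at hp ⊢; omega

theorem sum_filter_mod_two_B_mul_A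
    (hB0 : ∀ n k : ℕ, n < k → B n k = 0)
    (hA : ∀ (n : ℕ) (k : ℤ), A (n + 2) k - A n k = ((n : ℝ) + 1) ^ 2 * A n (k - 2))
    (hB : ∀ n k : ℕ, 1 ≤ n → B n k - B n (k + 2) = ((k : ℝ) + 1) ^ 2 * B (n + 2) (k + 2))
    (hsum : ∀ p n k : ℕ, 1 ≤ n → 1 ≤ k → k + 1 ≤ n →
      ∑ j ∈ (Icc k n).filter (fun j => j % 2 = p % 2),
          (if j = 1 then B n 1 * A 1 1
           else B n j * ((j : ℝ) - 1) ^ 2 * A (j - 2) ((k : ℤ) - 2)) =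
        π ^ (n - k) / (n - k).factorial)
    {d ℓ : ℕ} (hd : 1 ≤ d) (hℓ : 1 ≤ ℓ) (p : ℕ) :
    ∑ r ∈ (Icc d (d + ℓ)).filter (fun r => r % 2 = p % 2), B r d * A d ((r : ℤ) - ℓ) =
      π ^ ℓ / ℓ.factorial := by
  obtain ⟨k, hk₁, hk₂, hkp⟩ : ∃ k, d + 1 ≤ k ∧ k ≤ d + 2 ∧ (k + ℓ) % 2 = p % 2 :=
    ⟨d + 1 + (d + ℓ + 1 + p) % 2, by omega, by omega, by omega⟩
  obtain ⟨c, m, hdc, hcd, hn⟩ : ∃ c m, d ≤ c ∧ c ≤ d + 1 ∧ k + ℓ = c + 2 * m :=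
    ⟨d + (k + ℓ - d) % 2, (k + ℓ - d) / 2, by omega, by omega, by omega⟩
  have hyp := hsum d (k + ℓ) k (by omega) (by omega) (by omega)
  rw [Nat.add_sub_cancel_left] at hyp
  calc _ = ∑ i ∈ range m, B (c + 2 * i) d * A d ((k : ℤ) - 2 + 2 * i + 2 - 2 * m) := by
        rw [sum_eq_sum_range_step_two (a := c) (m := m) _ fun j => by
          simp only [mem_filter, mem_Icc]; omega]
        refine sum_congr rfl fun i _ => ?_
        have : (k : ℤ) + ℓ = c + 2 * m := by exact_mod_cast hn
        congr 2; push_cast; omega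
    _ = ∑ i ∈ range m, B (c + 2 * m) (d + 2 * i + 2) * (((d + 2 * i : ℕ) : ℝ) + 1) ^ 2 *
          A (d + 2 * i) ((k : ℤ) - 2) :=
        (sum_range_B_mul_A hB0 hA hB (by omega) hcd m _).symm
    _ = ∑ j ∈ (Icc k (k + ℓ)).filter (fun j => j % 2 = d % 2),
          (if j = 1 then B (k + ℓ) 1 * A 1 1
           else B (k + ℓ) j * ((j : ℝ) - 1) ^ 2 * A (j - 2) ((k : ℤ) - 2)) := by
        symm
        rw [sum_eq_sum_range_step_two (a := d + 2) (m := m) _ fun j => by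
          simp only [mem_filter, mem_Icc]; omega]
        refine sum_congr rfl fun i _ => ?_
        rw [if_neg (by omega), hn, show d + 2 + 2 * i = d + 2 * i + 2 by ring, Nat.add_sub_cancel]
        push_cast; ring
    _ = _ := hyp

end Recurrences

theorem sum_A_B_joint_second_argument_general
    (A : ℕ → ℤ → ℝ) (B : ℕ → ℕ → ℝ)
    (hB0 : ∀ n k : ℕ, n < k → B n k = 0)
    (hA : ∀ (n : ℕ) (k : ℤ), A (n + 2) k - A n k = ((n : ℝ) + 1) ^ 2 * A n (k - 2))
    (hB : ∀ n k : ℕ, 1 ≤ n → B n k - B n (k + 2) = ((k : ℝ) + 1) ^ 2 * B (n + 2) (k + 2))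
    (hsum_even : ∀ n k : ℕ, 1 ≤ n → 1 ≤ k → k + 1 ≤ n →
      ∑ j ∈ (Finset.Icc k n).filter (fun j => Even j),
          (if j = 1 then B n 1 * A 1 1
           else B n j * ((j : ℝ) - 1) ^ 2 * A (j - 2) ((k : ℤ) - 2)) =
        π ^ (n - k) / (n - k).factorial)
    (hsum_odd : ∀ n k : ℕ, 1 ≤ n → 1 ≤ k → k + 1 ≤ n →
      ∑ j ∈ (Finset.Icc k n).filter (fun j => Odd j),
          (if j = 1 then B n 1 * A 1 1
           else B n j * ((j : ℝ) - 1) ^ 2 * A (j - 2) ((k : ℤ) - 2)) =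
        π ^ (n - k) / (n - k).factorial)
    (d ℓ : ℕ) (hd : 1 ≤ d) (hℓ : 1 ≤ ℓ) :
    (∑ r ∈ (Finset.Icc d (d + ℓ)).filter (fun r => Even r),
        B r d * A d ((r : ℤ) - ℓ) = π ^ ℓ / ℓ.factorial) ∧
    (∑ r ∈ (Finset.Icc d (d + ℓ)).filter (fun r => Odd r),
        B r d * A d ((r : ℤ) - ℓ) = π ^ ℓ / ℓ.factorial) := by
  have key := sum_filter_mod_two_B_mul_A hB0 hA hB (sum_filter_mod_two_eq hsum_even hsum_odd) hd hℓ
  constructor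
  · rw [← key 0]
    congr 1
    exact filter_congr fun r _ => Nat.even_iff
  · rw [← key 1]
    congr 1
    exact filter_congr fun r _ => Nat.odd_iff

theorem sum_A_B_joint_second_argument
    (A : ℕ → ℤ → ℝ) (B : ℕ → ℕ → ℝ)
    (hA0 : ∀ (n : ℕ) (k : ℤ), (n : ℤ) < k → A n k = 0)
    (hB0 : ∀ n k : ℕ, n < k → B n k = 0)
    (hA : ∀ (n : ℕ) (k : ℤ), A (n + 2) k - A n k = ((n : ℝ) + 1) ^ 2 * A n (k - 2))
    (hB : ∀ n k : ℕ, 1 ≤ n → B n k - B n (k + 2) = ((k : ℝ) + 1) ^ 2 * B (n + 2) (k + 2))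
    (hsum_even : ∀ n k : ℕ, 1 ≤ n → 1 ≤ k → k + 1 ≤ n →
      ∑ j ∈ (Finset.Icc k n).filter (fun j => Even j),
          (if j = 1 then B n 1 * A 1 1
           else B n j * ((j : ℝ) - 1) ^ 2 * A (j - 2) ((k : ℤ) - 2)) =
        π ^ (n - k) / (n - k).factorial)
    (hsum_odd : ∀ n k : ℕ, 1 ≤ n → 1 ≤ k → k + 1 ≤ n →
      ∑ j ∈ (Finset.Icc k n).filter (fun j => Odd j),
          (if j = 1 then B n 1 * A 1 1
           else B n j * ((j : ℝ) - 1) ^ 2 * A (j - 2) ((k : ℤ) - 2)) =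
        π ^ (n - k) / (n - k).factorial)
    (d ℓ : ℕ) (hd : 1 ≤ d) (hℓ : 1 ≤ ℓ) :
    (∑ r ∈ (Finset.Icc d (d + ℓ)).filter (fun r => Even r),
        B r d * A d ((r : ℤ) - ℓ) = π ^ ℓ / ℓ.factorial) ∧
    (∑ r ∈ (Finset.Icc d (d + ℓ)).filter (fun r => Odd r),
        B r d * A d ((r : ℤ) - ℓ) = π ^ ℓ / ℓ.factorial) :=
  sum_A_B_joint_second_argument_general A B hB0 hA hB hsum_even hsum_odd d ℓ hd hℓ
end
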